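/- For every simplicial complex K over a finite set I, there exists a finite alphabet A and a language L ⊆ A^I such that a complex K' over I generates L if and only if K ⊆ K'. In particular, K is the unique minimal complex generating L. -/

import Mathlib

/-- `W` determines output coordinate `i` of `f`: the value `f x i` only
depends on the restriction of `x` to `W`. -/
def Determines {B J A I : Type*} (f : (J → B) → (I → A)) (i : I) (W : Set J) : Prop :=
  ∀ x y : J → B, (∀ j ∈ W, x j = y j) → f x i = f y i

/-- The input window of output coordinate `i`: the intersection of all
determining sets (which, for finite data, is the smallest determining set). -/
def window {B J A I : Type*} (f : (J → B) → (I → A)) (i : I) : Set J :=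
  ⋂₀ {W : Set J | Determines f i W}

/-- The dual window of an input coordinate `j`. -/
def dualWindow {B J A I : Type*} (f : (J → B) → (I → A)) (j : J) : Set I :=
  {i : I | j ∈ window f i}

/-- The communication complex of `f`: `S ∈ K_f` iff `⋂_{i ∈ S} W_f(i) ≠ ∅`
(the empty intersection being all of `J`). -/
def commComplex {B J A I : Type*} (f : (J → B) → (I → A)) : Set (Set I) :=
  {S : Set I | (⋂ i ∈ S, window f i).Nonempty}

/-- A complex `K` over `I` generates the language `L ⊆ A^I` if some function
`f : B^J → A^I` (with `B, J` finite, `J` nonempty) has image `L` and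
communication complex contained in `K`. -/
def Generates {A I : Type*} (K : Set (Set I)) (L : Set (I → A)) : Prop :=
  ∃ (B J : Type) (_ : Finite B) (_ : Finite J) (_ : Nonempty J)
    (f : (J → B) → (I → A)), Set.range f = L ∧ commComplex f ⊆ K

/-- A complex is connected if no nontrivial partition of the vertex set splits
all of its simplices. -/
def ConnectedComplex {I : Type*} (K : Set (Set I)) : Prop :=
  ¬ ∃ I0 : Set I, I0 ≠ ∅ ∧ I0 ≠ Set.univ ∧ ∀ S ∈ K, S ⊆ I0 ∨ S ⊆ I0ᶜ

/-- A simplicial complex: a downward closed collection of subsets. -/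
def IsComplex {I : Type*} (K : Set (Set I)) : Prop :=
  ∀ S ∈ K, ∀ T ⊆ S, T ∈ K

/-- The 1-skeleton of a complex, as a simple graph. -/
def skeletonGraph {I : Type*} (K : Set (Set I)) : SimpleGraph I :=
  SimpleGraph.fromRel (fun i j => ({i, j} : Set I) ∈ K)

/-- The complex associated to a graph: the empty set, the singletons, and the
edges. -/
def treeComplex {I : Type*} (G : SimpleGraph I) : Set (Set I) :=
  {S | S = ∅ ∨ (∃ i, S = {i}) ∨ ∃ i j, G.Adj i j ∧ S = ({i, j} : Set I)}

/-- The maximal simplices of a complex. -/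
def maxSimplices {I : Type*} (K : Set (Set I)) : Set (Set I) :=
  {S | S ∈ K ∧ ∀ T ∈ K, S ⊆ T → S = T}

/-- The image `f_*(K)` of a complex `K` on the input coordinates of `f`:
generated by the unions of dual windows over simplices of `K`. -/
def pushComplex {B J A I : Type*} (f : (J → B) → (I → A)) (K : Set (Set J)) : Set (Set I) :=
  {T : Set I | ∃ S ∈ K, T ⊆ ⋃ j ∈ S, dualWindow f j}


/-!
The witness is the language of all words `x_h = codeWord K h`, `h : K → Bool`, where `x_h i`
records `h` on the simplices containing `i`. Reading these words off coordinatewise, with one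
input bit per simplex, shows that `K` generates the language. Conversely, if `g` generates it and
`S ∈ K`, then the bit `h S` can be read off from `g z i` for every `i ∈ S`, so it is determined by
each window `W_g(i)`, `i ∈ S`, hence by their intersection; as this bit is not constant, the
intersection is nonempty, i.e. `S ∈ K_g`.
-/

section DeterminedBy

variable {J B C : Type*}

def DeterminedBy (ψ : (J → B) → C) (W : Set J) : Prop :=
  ∀ x y : J → B, (∀ j ∈ W, x j = y j) → ψ x = ψ y

lemma determinedBy_univ (ψ : (J → B) → C) : DeterminedBy ψ Set.univ :=
  fun _ _ hxy => congrArg ψ (funext fun j => hxy j trivial)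

lemma DeterminedBy.inter {ψ : (J → B) → C} {W₁ W₂ : Set J} (h₁ : DeterminedBy ψ W₁)
    (h₂ : DeterminedBy ψ W₂) : DeterminedBy ψ (W₁ ∩ W₂) := by
  classical
  intro x y hxy
  have hxz : ψ x = ψ (W₁.piecewise x y) :=
    h₁ _ _ fun j hj => (W₁.piecewise_eq_of_mem x y hj).symm
  have hzy : ψ (W₁.piecewise x y) = ψ y := h₂ _ _ fun j hj => by
    by_cases h : j ∈ W₁
    · rw [W₁.piecewise_eq_of_mem x y h, hxy j ⟨h, hj⟩]
    · exact W₁.piecewise_eq_of_notMem x y h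
  exact hxz.trans hzy

lemma determinedBy_biInter {ι : Type*} {ψ : (J → B) → C} {T : Set ι} (hT : T.Finite)
    {W : ι → Set J} (h : ∀ i ∈ T, DeterminedBy ψ (W i)) : DeterminedBy ψ (⋂ i ∈ T, W i) := by
  induction T, hT using Set.Finite.induction_on with
  | empty => simpa using determinedBy_univ ψ
  | insert _ _ ih =>
    rw [Set.biInter_insert]
    exact (h _ (Set.mem_insert _ _)).inter (ih fun i hi => h i (Set.mem_insert_of_mem _ hi))

lemma DeterminedBy.eq_of_empty {ψ : (J → B) → C} (h : DeterminedBy ψ ∅) (x y : J → B) :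
    ψ x = ψ y :=
  h x y fun _ hj => hj.elim

end DeterminedBy

section CommComplex

variable {J B A I C : Type*}

lemma determines_window [Finite J] (f : (J → B) → (I → A)) (i : I) :
    Determines f i (window f i) := by
  rw [window, Set.sInter_eq_biInter]
  exact determinedBy_biInter (Set.toFinite _) fun _ hW => hW

lemma empty_mem_commComplex [Nonempty J] (f : (J → B) → (I → A)) : ∅ ∈ commComplex f := by
  simp [commComplex]

lemma mem_commComplex_of_forall_factor [Finite J] [Finite I] {f : (J → B) → (I → A)} {T : Set I}
    {ψ : (J → B) → C} (hψ : ∀ i ∈ T, ∃ φ : A → C, ∀ z, ψ z = φ (f z i)) {x y : J → B}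
    (hxy : ψ x ≠ ψ y) : T ∈ commComplex f := by
  have hdet : DeterminedBy ψ (⋂ i ∈ T, window f i) := by
    refine determinedBy_biInter T.toFinite fun i hi z z' hzz' => ?_
    obtain ⟨φ, hφ⟩ := hψ i hi
    rw [hφ, hφ, determines_window f i z z' hzz']
  exact Set.nonempty_iff_ne_empty.mpr fun hT => hxy ((hT ▸ hdet).eq_of_empty x y)

lemma Generates.mono {L : Set (I → A)} {K K' : Set (Set I)} (hL : Generates K L) (hKK' : K ⊆ K') :
    Generates K' L := by
  obtain ⟨B, J, hB, hJ, hJne, f, hf, hfK⟩ := hL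
  exact ⟨B, J, hB, hJ, hJne, f, hf, hfK.trans hKK'⟩

end CommComplex

section CodeWord

variable {I : Type} (K : Set (Set I))

open Classical in
noncomputable def codeWord (h : K → Bool) (i : I) (S : K) : Bool :=
  if i ∈ S.1 then h S else false

def codeLanguage : Set (I → K → Bool) :=
  Set.range (codeWord K)

variable {K}

lemma codeWord_of_mem {h : K → Bool} {i : I} {S : K} (hi : i ∈ S.1) : codeWord K h i S = h S :=
  if_pos hi

lemma codeWord_of_notMem {h : K → Bool} {i : I} {S : K} (hi : i ∉ S.1) :
    codeWord K h i S = false :=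
  if_neg hi

lemma window_codeWord_subset (i : I) : window (codeWord K) i ⊆ {S | i ∈ S.1} := by
  refine Set.sInter_subset_of_mem fun x y hxy => funext fun S => ?_
  by_cases hi : i ∈ S.1
  · rw [codeWord_of_mem hi, codeWord_of_mem hi]
    exact hxy S hi
  · rw [codeWord_of_notMem hi, codeWord_of_notMem hi]

lemma commComplex_codeWord_subset (hK : IsComplex K) : commComplex (codeWord K) ⊆ K := by
  rintro T ⟨S, hS⟩
  refine hK S.1 S.2 T fun i hi => window_codeWord_subset i ?_
  exact Set.mem_iInter₂.mp hS i hi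

lemma generates_codeLanguage [Finite I] (hK : IsComplex K) (hKe : ∅ ∈ K) :
    Generates K (codeLanguage K) :=
  ⟨Bool, K, inferInstance, inferInstance, ⟨⟨∅, hKe⟩⟩, codeWord K, rfl,
    commComplex_codeWord_subset hK⟩

lemma subset_of_generates_codeLanguage [Finite I] {K' : Set (Set I)}
    (hK' : Generates K' (codeLanguage K)) : K ⊆ K' := by
  obtain ⟨B, J, _, _, _, g, hg, hgK'⟩ := hK'
  intro T hT
  apply hgK'
  obtain rfl | ⟨i₀, hi₀⟩ := T.eq_empty_or_nonempty
  · exact empty_mem_commComplex g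
  let S : K := ⟨T, hT⟩
  have hcode : ∀ h, codeWord K h ∈ Set.range g := fun h => hg ▸ Set.mem_range_self h
  obtain ⟨x, hx⟩ := hcode fun _ => false
  obtain ⟨y, hy⟩ := hcode fun S' => decide (S' = S)
  refine mem_commComplex_of_forall_factor (ψ := fun z => g z i₀ S) (x := x) (y := y)
    (fun i hi => ⟨fun a => a S, fun z => ?_⟩) ?_
  · obtain ⟨h, hh⟩ : g z ∈ codeLanguage K := hg ▸ Set.mem_range_self z
    simp only [← hh, codeWord_of_mem (S := S) hi, codeWord_of_mem (S := S) hi₀]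
  · simp [hx, hy, codeWord_of_mem (S := S) hi₀]

end CodeWord

/-- every simplicial complex `K` is realized as the unique
minimal complex generating some language: there is a finite alphabet `A` and a
language `L ⊆ A^I` such that a complex generates `L` iff it contains `K`. -/
theorem stmt10 {I : Type} [Finite I] (K : Set (Set I)) (hK : IsComplex K)
    (hKe : ∅ ∈ K) :
    ∃ (A : Type) (_ : Finite A) (L : Set (I → A)),
      ∀ K' : Set (Set I), Generates K' L ↔ K ⊆ K' :=
  ⟨K → Bool, inferInstance, codeLanguage K, fun _ =>
    ⟨subset_of_generates_codeLanguage, (generates_codeLanguage hK hKe).mono⟩⟩
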